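/- With σ(N,a,b) = Σ_{m∈ℤ} e^{2πim(ηN − 1.5(a+b))} sin³(πm(b−a))/(π³m³) (m=0 term equal to (b−a)³), there exist a quadratic irrational η, reals 0 < a < b < 1, and infinitely many N for which σ(N,a,b) ≠ (b−a)³; consequently the naive density prediction J_{3,1}(N) ∼ (b−a)³ I_{3,1}(N) fails for primes restricted by a < {ηp} < b. -/

import Mathlib

def IsQuadraticIrrational (η : ℝ) : Prop :=
  Irrational η ∧ ∃ A B C : ℤ, A ≠ 0 ∧ (A : ℝ) * η ^ 2 + B * η + C = 0

noncomputable def sigmaTerm (η a b : ℝ) (N : ℕ) (m : ℤ) : ℂ :=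
  if m = 0 then ((b - a) ^ 3 : ℝ)
  else Complex.exp (2 * Real.pi * Complex.I * m * (η * N - 1.5 * (a + b)))
        * (Real.sin (Real.pi * m * (b - a)) ^ 3 / (Real.pi ^ 3 * (m : ℝ) ^ 3))

noncomputable def sigmaSeries (η a b : ℝ) (N : ℕ) : ℂ := ∑' m : ℤ, sigmaTerm η a b N m

open Real Filter

/-!
Take `η = √2` and `(a, b) = (1/4, 3/4)`. Then `σ(N, a, b) = Φ(√2 N - 3/2)`, where
`Φ(x) = ∑ c_m e(m x)` has absolutely summable coefficients `c_m = sin³(πm/2)/(π³m³)`, so `Φ` is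
continuous and `1`-periodic. At `x = 1/2` the phase `e(m/2) = cos(πm)` turns `c_m` into
`-sin(πm/2)/(π³m³)`, so `Φ(1/2) = 1/8 - 2 L(χ₄, 3)/π³ = 1/8 - 1/16 ≠ 1/8`. Hence `Φ ≠ 1/8` near
`1/2`, and by Dirichlet's approximation theorem `√2 N` is within any `δ > 0` of an integer for
infinitely many `N`.
-/

lemma isQuadraticIrrational_sqrt_two : IsQuadraticIrrational (√2) :=
  ⟨irrational_sqrt_two, 1, 0, -2, one_ne_zero, by push_cast; simp⟩

lemma frequently_abs_mul_sub_int_lt (ξ : ℝ) {δ : ℝ} (hδ : 0 < δ) :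
    ∃ᶠ N : ℕ in atTop, ∃ n : ℤ, |ξ * N - n| < δ := by
  refine frequently_atTop.2 fun M ↦ ?_
  obtain ⟨q, hq⟩ := exists_nat_gt ((M + 1) / δ)
  have hq₀ : 0 < q := by exact_mod_cast (div_pos (by positivity) hδ).trans hq
  obtain ⟨k, hk₀, -, hk⟩ := Real.exists_nat_abs_mul_sub_round_le ξ hq₀
  -- Multiplying a good approximation by `M + 1` keeps it good enough and makes `N ≥ M`.
  refine ⟨(M + 1) * k, by nlinarith, (M + 1) * round (k * ξ), ?_⟩
  have hq' : (M + 1 : ℝ) / (q + 1) < δ := by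
    rw [div_lt_iff₀ (by positivity)]
    rw [div_lt_iff₀ hδ] at hq
    linarith
  calc |ξ * ((M + 1) * k : ℕ) - ((M + 1) * round (k * ξ) : ℤ)|
      = (M + 1) * |k * ξ - round (k * ξ)| := by
        rw [← abs_of_pos (by positivity : (0 : ℝ) < M + 1), ← abs_mul]
        push_cast
        ring_nf
    _ ≤ (M + 1) * (1 / (q + 1)) := by gcongr
    _ < δ := by rwa [mul_one_div]

noncomputable def fourierSum (c : ℤ → ℂ) (x : ℝ) : ℂ :=
  ∑' m : ℤ, c m * Complex.exp (2 * π * Complex.I * m * x)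

lemma continuous_fourierSum {c : ℤ → ℂ} (hc : Summable fun m ↦ ‖c m‖) :
    Continuous (fourierSum c) := by
  refine continuous_tsum (fun m ↦ by fun_prop) hc fun m x ↦ ?_
  rw [norm_mul, show 2 * π * Complex.I * m * x = ((2 * π * m * x : ℝ) : ℂ) * Complex.I by
    push_cast; ring, Complex.norm_exp_ofReal_mul_I, mul_one]

lemma fourierSum_sub_int (c : ℤ → ℂ) (x : ℝ) (n : ℤ) :
    fourierSum c (x - n) = fourierSum c x := by
  refine tsum_congr fun m ↦ ?_
  rw [show 2 * π * Complex.I * m * ((x - n : ℝ) : ℂ)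
      = 2 * π * Complex.I * m * x + ((-(m * n) : ℤ) : ℂ) * (2 * π * Complex.I) by push_cast; ring,
    Complex.exp_add, Complex.exp_int_mul_two_pi_mul_I, mul_one]

noncomputable def sigmaCoeff (ℓ : ℝ) (m : ℤ) : ℝ :=
  if m = 0 then ℓ ^ 3 else sin (π * m * ℓ) ^ 3 / (π ^ 3 * (m : ℝ) ^ 3)

lemma abs_sigmaCoeff_le (ℓ : ℝ) {m : ℤ} (hm : m ≠ 0) : |sigmaCoeff ℓ m| ≤ |1 / (m : ℝ) ^ 3| := by
  have hm' : (0 : ℝ) < |(m : ℝ)| ^ 3 := by positivity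
  rw [sigmaCoeff, if_neg hm, abs_div, abs_mul, abs_one_div, abs_pow, abs_pow, abs_pow,
    abs_of_pos pi_pos, div_le_div_iff₀ (by positivity) hm', one_mul]
  calc |sin (π * m * ℓ)| ^ 3 * |(m : ℝ)| ^ 3 ≤ 1 * |(m : ℝ)| ^ 3 := by
        gcongr
        exact pow_le_one₀ (abs_nonneg _) (abs_sin_le_one _)
    _ ≤ π ^ 3 * |(m : ℝ)| ^ 3 := by
        gcongr
        exact one_le_pow₀ (by linarith [pi_gt_three])

lemma summable_norm_sigmaCoeff (ℓ : ℝ) : Summable fun m ↦ ‖(sigmaCoeff ℓ m : ℂ)‖ := by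
  refine Summable.of_norm_bounded_eventually
    ((summable_one_div_int_pow.2 (by norm_num : 1 < 3)).abs) ?_
  filter_upwards [(Set.finite_singleton (0 : ℤ)).compl_mem_cofinite] with m hm
  simpa using abs_sigmaCoeff_le ℓ hm

lemma sigmaSeries_eq_fourierSum (η a b : ℝ) (N : ℕ) :
    sigmaSeries η a b N
      = fourierSum (fun m ↦ sigmaCoeff (b - a) m) (η * N - 3 / 2 * (a + b)) := by
  refine tsum_congr fun m ↦ ?_
  rcases eq_or_ne m 0 with rfl | hm
  · simp [sigmaTerm, sigmaCoeff]
  · simp only [sigmaTerm, sigmaCoeff, if_neg hm]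
    rw [mul_comm]
    push_cast
    ring_nf

lemma sin_pi_mul_int (m : ℤ) : sin (π * m) = 0 := by
  rw [mul_comm, sin_int_mul_pi]

lemma cos_int_mul_pi_mul_sin_half_pow_three (m : ℤ) :
    cos (π * m) * sin (π * m / 2) ^ 3 = -sin (π * m / 2) := by
  set θ := π * m / 2
  have hπm : π * m = 2 * θ := by ring
  have hsc : sin θ * cos θ = 0 := by
    have := sin_two_mul θ
    rw [← hπm, sin_pi_mul_int] at this
    linarith
  rw [hπm, cos_two_mul]
  linear_combination (2 * sin θ ^ 3 - (1 + 2 * sin θ ^ 2) * sin θ) * sin_sq_add_cos_sq θ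
    + (1 + 2 * sin θ ^ 2) * cos θ * hsc

lemma hasSum_int_one_div_pow_three_mul_sin :
    HasSum (fun m : ℤ ↦ 1 / (m : ℝ) ^ 3 * sin (π * m / 2)) (π ^ 3 / 16) := by
  have hnat := hasSum_L_function_mod_four_eval_three
  have hneg : HasSum (fun n : ℕ ↦ 1 / ((-n : ℤ) : ℝ) ^ 3 * sin (π * (-n : ℤ) / 2)) (π ^ 3 / 32) :=
    hnat.congr_fun fun n ↦ by
      push_cast
      rw [neg_pow, mul_neg, neg_div, sin_neg]
      ring
  rw [show π ^ 3 / 16 = π ^ 3 / 32 + π ^ 3 / 32 - 1 / ((0 : ℤ) : ℝ) ^ 3 * sin (π * (0 : ℤ) / 2) by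
    norm_num; ring]
  exact hnat.of_nat_of_neg (f := fun m : ℤ ↦ 1 / (m : ℝ) ^ 3 * sin (π * m / 2)) hneg

lemma fourierSum_sigmaCoeff_half_half :
    fourierSum (fun m ↦ sigmaCoeff (1 / 2) m) (1 / 2) = (1 / 16 : ℝ) := by
  have h := (hasSum_ite_eq (0 : ℤ) (1 / 8 : ℝ)).sub
    (hasSum_int_one_div_pow_three_mul_sin.div_const (π ^ 3))
  rw [show (1 / 8 : ℝ) - π ^ 3 / 16 / π ^ 3 = 1 / 16 by field_simp; norm_num] at h
  refine ((Complex.hasSum_ofReal.2 h).congr_fun fun m ↦ ?_).tsum_eq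
  rw [show 2 * π * Complex.I * m * ((1 / 2 : ℝ) : ℂ) = ((π * m : ℝ) : ℂ) * Complex.I by
      push_cast; ring, Complex.exp_mul_I, ← Complex.ofReal_cos, ← Complex.ofReal_sin,
    sin_pi_mul_int, Complex.ofReal_zero, zero_mul, add_zero, ← Complex.ofReal_mul,
    Complex.ofReal_inj]
  rcases eq_or_ne m 0 with rfl | hm
  · norm_num [sigmaCoeff]
  · rw [sigmaCoeff, if_neg hm, if_neg hm, div_mul_eq_mul_div, mul_comm _ (cos _), mul_one_div,
      cos_int_mul_pi_mul_sin_half_pow_three]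
    field_simp
    ring

theorem naive_density_prediction_fails :
    ∃ η : ℝ, IsQuadraticIrrational η ∧ ∃ a b : ℝ, 0 < a ∧ a < b ∧ b < 1 ∧
      {N : ℕ | sigmaSeries η a b N ≠ (((b - a) ^ 3 : ℝ) : ℂ)}.Infinite := by
  refine ⟨√2, isQuadraticIrrational_sqrt_two, 1 / 4, 3 / 4, by norm_num, by norm_num, by norm_num, ?_⟩
  have hΦ : fourierSum (fun m ↦ sigmaCoeff (1 / 2) m) (1 / 2) ≠ ((1 / 8 : ℝ) : ℂ) := by
    rw [fourierSum_sigmaCoeff_half_half]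
    norm_num
  obtain ⟨δ, hδ, hne⟩ := Metric.eventually_nhds_iff.1
    ((continuous_fourierSum (summable_norm_sigmaCoeff _)).continuousAt.eventually_ne hΦ)
  refine Nat.frequently_atTop_iff_infinite.1 ((frequently_abs_mul_sub_int_lt √2 hδ).mono ?_)
  rintro N ⟨n, hn⟩
  rw [sigmaSeries_eq_fourierSum, ← fourierSum_sub_int _ _ (n - 2)]
  norm_num only
  refine hne ?_
  rw [Real.dist_eq]
  convert hn using 2
  push_cast
  ring
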